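/- arXiv:2305.09245 — 2 statements merged into one kernel-verified Lean document; each statement's English description precedes it below -/
import Mathlib

section
/- Let V be a finite set of vertices with open intervals I_v = (L_v,U_v) and weights w_v ∈ I_v, and let S be a hyperedge. If v ∈ S is not a minimum-weight vertex of S but w_u ∈ I_v for the minimum-weight vertex u of S, then every feasible query set for orienting S contains v. -/
/-! If `v` stays unqueried, its interval `(L v, U v)` still contains `w u`. Then `v` cannot be
the certified minimum, because the interval of `u` reaches below `U v`; and no other vertex `m`
can be certified below `v`, because `w m ≥ w u > L v`. -/

open Finset

/-- Lower endpoint of vertex `v`'s interval after querying the set `Q`. -/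
def qlo {V : Type*} [DecidableEq V] (L w : V → ℝ) (Q : Finset V) (v : V) : ℝ :=
  if v ∈ Q then w v else L v

/-- Upper endpoint of vertex `v`'s interval after querying the set `Q`. -/
def qhi {V : Type*} [DecidableEq V] (U w : V → ℝ) (Q : Finset V) (v : V) : ℝ :=
  if v ∈ Q then w v else U v

/-- The query set `Q` suffices to orient the hyperedge `S`: some vertex of `S`
has its (updated) interval weakly below all other (updated) intervals of `S`. -/
def Solves {V : Type*} [DecidableEq V] (L U w : V → ℝ) (Q : Finset V) (S : Finset V) : Prop :=
  ∃ m ∈ S, ∀ u ∈ S, u ≠ m → qhi U w Q m ≤ qlo L w Q u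

section QueriedEndpoints

variable {V : Type*} [DecidableEq V] {L U w : V → ℝ} {Q : Finset V} {v x : V}

theorem qlo_le (hx : L x ≤ w x) : qlo L w Q x ≤ w x := by
  unfold qlo; split_ifs; exacts [le_rfl, hx]

theorem le_qhi (hx : w x ≤ U x) : w x ≤ qhi U w Q x := by
  unfold qhi; split_ifs; exacts [le_rfl, hx]

theorem qlo_lt_qhi_of_lt_upper (hv : v ∉ Q) (hx : L x ≤ w x) (h : w x < U v) :
    qlo L w Q x < qhi U w Q v := by
  rw [qhi, if_neg hv]
  exact (qlo_le hx).trans_lt h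

theorem qlo_lt_qhi_of_lower_lt (hv : v ∉ Q) (hx : w x ≤ U x) (h : L v < w x) :
    qlo L w Q v < qhi U w Q x := by
  rw [qlo, if_neg hv]
  exact h.trans_le (le_qhi hx)

end QueriedEndpoints

theorem stmt1 {V : Type*} [DecidableEq V] (L U w : V → ℝ)
    (hw : ∀ x : V, w x ∈ Set.Ioo (L x) (U x))
    (S : Finset V) (v u : V) (hvS : v ∈ S) (huS : u ∈ S)
    (humin : ∀ x ∈ S, w u ≤ w x)
    (hvnotmin : w u < w v)
    (hwu : w u ∈ Set.Ioo (L v) (U v)) :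
    ∀ Q : Finset V, Solves L U w Q S → v ∈ Q := by
  rintro Q ⟨m, hmS, hm⟩
  by_contra hvQ
  by_cases hmv : m = v
  · subst hmv
    have hum : u ≠ m := by
      rintro rfl
      exact lt_irrefl _ hvnotmin
    exact (qlo_lt_qhi_of_lt_upper hvQ (hw u).1.le hwu.2).not_ge (hm u huS hum)
  · have hLm : L v < w m := hwu.1.trans_le (humin m hmS)
    exact (qlo_lt_qhi_of_lower_lt hvQ (hw m).2.le hLm).not_ge (hm v hvS (Ne.symm hmv))
end

section
/- Let v and u be vertices with open intervals I_v = (L_v,U_v), I_u = (L_u,U_u) and weights w_v ∈ I_v, w_u ∈ I_u, belonging to a common hyperedge S in which v is leftmost (L_v is minimum among lower limits in S). If I_u ⊆ I_v, then v is mandatory: every feasible query set for S contains v. -/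
/-! If `v` is not queried, neither `v` nor any other vertex can be the minimum: `v`'s interval
contains `w u` (so `v` does not lie below `u`), and every other vertex `m` has its updated
upper end above `L m ≥ L v` (so `m` does not lie below `v`). -/

open Finset

section QueriedEndpoints

variable {V : Type*} [DecidableEq V] {L U w : V → ℝ} {Q : Finset V} {x : V}

theorem qlo_of_notMem (hx : x ∉ Q) : qlo L w Q x = L x := if_neg hx

theorem qhi_of_notMem (hx : x ∉ Q) : qhi U w Q x = U x := if_neg hx

theorem qlo_le_weight (h : L x ≤ w x) : qlo L w Q x ≤ w x := by
  unfold qlo; split_ifs <;> first | exact le_rfl | exact h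

theorem weight_le_qhi (h : w x ≤ U x) : w x ≤ qhi U w Q x := by
  unfold qhi; split_ifs <;> first | exact le_rfl | exact h

end QueriedEndpoints

theorem stmt12 {V : Type*} [DecidableEq V] (L U w : V → ℝ)
    (hw : ∀ x : V, w x ∈ Set.Ioo (L x) (U x))
    (S : Finset V) (v u : V) (hvS : v ∈ S) (huS : u ∈ S) (hne : v ≠ u)
    (hleft : ∀ x ∈ S, L v ≤ L x)
    (hsub : Set.Ioo (L u) (U u) ⊆ Set.Ioo (L v) (U v)) :
    ∀ Q : Finset V, Solves L U w Q S → v ∈ Q := by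
  rintro Q ⟨m, hmS, hm⟩
  by_contra hvQ
  obtain rfl | hmv := eq_or_ne m v
  · have hvu := hm u huS hne.symm
    rw [qhi_of_notMem hvQ] at hvu
    have hwu_lt : w u < U m := (hsub (hw u)).2
    linarith [qlo_le_weight (Q := Q) (hw u).1.le]
  · have hmv' := hm v hvS hmv.symm
    rw [qlo_of_notMem hvQ] at hmv'
    linarith [hleft m hmS, (hw m).1, weight_le_qhi (Q := Q) (hw m).2.le]
end
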